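/- For each r ∈ {2,3,4} there exists y ∈ ℂ⁶ ∖ {0} with Σ_k y_k = 0 and (Σ_k y_k²)² ≠ 4 Σ_k y_k⁴ such that exactly r of the 10 nodes [ε^A] satisfy Σ_k ε^A_k y_k = 0; consequently for each r ∈ {2,3,4} there is a hyperplane section of the Segre cubic which is a cubic surface with exactly r singular points. For r = 4 one may take y = e_i − e_j for any i ≠ j. -/

import Mathlib

open scoped BigOperators

/-- The vector `ε^A` with coordinate `1` on `A` and `-1` off `A`. -/
noncomputable def eps (A : Finset (Fin 6)) : Fin 6 → ℂ := fun k => if k ∈ A then 1 else -1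

lemma eps_ne_zero (A : Finset (Fin 6)) : eps A ≠ 0 := by
  intro h
  have h0 := congrFun h 0
  simp only [eps, Pi.zero_apply] at h0
  split at h0
  · exact one_ne_zero h0
  · exact (neg_ne_zero.mpr (one_ne_zero (α := ℂ))) h0

/-- The node `[ε^A]` lies on the hyperplane `H_y`. -/
def NodeOnHyp (y : Fin 6 → ℂ) (p : Projectivization ℂ (Fin 6 → ℂ)) : Prop :=
  ∃ A : Finset (Fin 6), A.card = 3 ∧ (∑ k, eps A k * y k) = 0 ∧
    p = Projectivization.mk ℂ (eps A) (eps_ne_zero A)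

/-- `p` is a singular point of the cubic surface `Σ₃ ∩ H_y` (Jacobian criterion). -/
def SingOnSection (y : Fin 6 → ℂ) (p : Projectivization ℂ (Fin 6 → ℂ)) : Prop :=
  ∃ (x : Fin 6 → ℂ) (hx : x ≠ 0), p = Projectivization.mk ℂ x hx ∧
    (∑ k, x k) = 0 ∧ (∑ k, (x k) ^ 3) = 0 ∧ (∑ k, y k * x k) = 0 ∧
    ¬ LinearIndependent ℂ ![(1 : Fin 6 → ℂ), fun k => (x k) ^ 2, y]

/-- The vector `e_i - e_j` in `ℂ⁶`. -/
noncomputable def eij (i j : Fin 6) : Fin 6 → ℂ := Pi.single i 1 - Pi.single j 1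


/-!
A node `[ε^A]` on `H_y` is a singular point of `Σ₃ ∩ H_y`, because `(ε^A)²` is the constant
vector. Conversely, at a singular point `x` a dependency between `1`, `x²` and `y` either makes
`x²` constant, and then `Σ x = 0` forces `x` to be a node, or gives `y = a + b x²`. In the latter
case `Σ y = 0` fixes `a`, and Newton's identities for the six coordinates of `x` (with
`p₁ = p₃ = 0`) express all even power sums up to `p₈` through `e₂, e₄, e₆`, which yields
`(Σ y²)² = 4 Σ y⁴`: `[y]` lies on the Castelnuovo–Richmond quartic. Off that quartic the
singular points are therefore exactly the nodes on `H_y`, and for integral `y` these are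
counted by a finite check.
-/

open Finset MvPolynomial

namespace MvPolynomial

theorem mul_eval_esymm_eq_sum {σ R : Type*} [Fintype σ] [CommRing R] (x : σ → R) (k : ℕ) :
    k * eval x (esymm σ R k) = (-1) ^ (k + 1) *
      ∑ a ∈ antidiagonal k with a.1 < k,
        (-1) ^ a.1 * eval x (esymm σ R a.1) * ∑ i, x i ^ a.2 := by
  simpa [map_sum, psum] using congrArg (eval x) (mul_esymm_eq_sum σ R k)

theorem esymm_eq_zero_of_card_lt {σ R : Type*} [Fintype σ] [CommRing R] {n : ℕ}
    (h : Fintype.card σ < n) : esymm σ R n = 0 := by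
  rw [esymm, powersetCard_eq_empty.mpr (by simpa using h), sum_empty]

end MvPolynomial

section PowerSums

variable {K : Type*} [Field K] [CharZero K] {x : Fin 6 → K}

/-- Here `a, b, c` are `e₂, e₄, e₆` of `x`: Newton's identities with `e₁ = e₃ = e₇ = e₈ = 0`. -/
theorem exists_even_power_sums_of_sum_eq_zero_of_sum_pow_three_eq_zero
    (h1 : ∑ k, x k = 0) (h3 : ∑ k, x k ^ 3 = 0) :
    ∃ a b c : K, ∑ k, x k ^ 2 = -2 * a ∧ ∑ k, x k ^ 4 = 2 * a ^ 2 - 4 * b ∧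
      ∑ k, x k ^ 6 = -2 * a ^ 3 + 6 * a * b - 6 * c ∧
      ∑ k, x k ^ 8 = 2 * a ^ 4 - 8 * a ^ 2 * b + 8 * a * c + 4 * b ^ 2 := by
  have newton (n : ℕ) := mul_eval_esymm_eq_sum x n
  have e7 : eval x (esymm (Fin 6) K 7) = 0 := by rw [esymm_eq_zero_of_card_lt (by simp), map_zero]
  have e8 : eval x (esymm (Fin 6) K 8) = 0 := by rw [esymm_eq_zero_of_card_lt (by simp), map_zero]
  have n2 := newton 2; have n3 := newton 3; have n4 := newton 4
  have n6 := newton 6; have n8 := newton 8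
  simp only [sum_filter, Nat.antidiagonal_succ] at n2 n3 n4 n6 n8
  simp [esymm_zero, h1, h3, e7, e8] at n2 n3 n4 n6 n8
  set a := eval x (esymm (Fin 6) K 2)
  set b := eval x (esymm (Fin 6) K 4)
  set c := eval x (esymm (Fin 6) K 6)
  have p2 : ∑ k, x k ^ 2 = -2 * a := by linear_combination n2
  have p4 : ∑ k, x k ^ 4 = 2 * a ^ 2 - 4 * b := by linear_combination n4 - a * p2
  have p6 : ∑ k, x k ^ 6 = -2 * a ^ 3 + 6 * a * b - 6 * c := by
    linear_combination n6 - a * p4 - b * p2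
  refine ⟨a, b, c, p2, p4, p6, ?_⟩
  linear_combination n8 - a * p6 - b * p4 - c * p2 + (∑ k, x k ^ 5) * n3

theorem sq_sum_sq_eq_four_mul_sum_pow_four_of_eq_add_mul_sq
    (h1 : ∑ k, x k = 0) (h3 : ∑ k, x k ^ 3 = 0) {y : Fin 6 → K} (hy : ∑ k, y k = 0) (a b : K)
    (hyx : ∀ k, y k = a + b * x k ^ 2) :
    (∑ k, y k ^ 2) ^ 2 = 4 * ∑ k, y k ^ 4 := by
  obtain ⟨α, β, γ, p2, p4, p6, p8⟩ :=
    exists_even_power_sums_of_sum_eq_zero_of_sum_pow_three_eq_zero h1 h3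
  simp only [hyx] at hy ⊢
  have s1 : ∑ k, (a + b * x k ^ 2) = 6 * a + b * ∑ k, x k ^ 2 := by
    simp only [Fin.sum_univ_six]; ring
  have s2 : ∑ k, (a + b * x k ^ 2) ^ 2 = 6 * a ^ 2 + 2 * a * b * ∑ k, x k ^ 2 +
      b ^ 2 * ∑ k, x k ^ 4 := by
    simp only [Fin.sum_univ_six]; ring
  have s4 : ∑ k, (a + b * x k ^ 2) ^ 4 = 6 * a ^ 4 + 4 * a ^ 3 * b * ∑ k, x k ^ 2 +
      6 * a ^ 2 * b ^ 2 * ∑ k, x k ^ 4 + 4 * a * b ^ 3 * ∑ k, x k ^ 6 + b ^ 4 * ∑ k, x k ^ 8 := by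
    simp only [Fin.sum_univ_six]; ring
  rw [s1, p2] at hy
  obtain rfl : a = b * α / 3 := by linear_combination hy / 6
  rw [s2, s4, p2, p4, p6, p8]
  ring

end PowerSums

section Nodes

variable {A B : Finset (Fin 6)}

theorem eps_sq (A : Finset (Fin 6)) (k : Fin 6) : eps A k ^ 2 = 1 := by
  unfold eps; split_ifs <;> norm_num

theorem eps_eq_one_iff {k : Fin 6} : eps A k = 1 ↔ k ∈ A := by
  unfold eps; split_ifs with h <;> norm_num [h]

theorem eps_injective : Function.Injective eps := fun A B h => by
  ext k; rw [← eps_eq_one_iff, h, eps_eq_one_iff]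

theorem eps_compl (A : Finset (Fin 6)) : eps Aᶜ = -eps A := by
  ext k; by_cases h : k ∈ A <;> simp [eps, h]

theorem sum_eps (A : Finset (Fin 6)) : ∑ k, eps A k = 2 * #A - 6 := by
  simp only [eps, sum_ite, sum_const, filter_mem_eq_inter, univ_inter, nsmul_eq_mul]
  have hcompl : #{k | k ∉ A} = #Aᶜ := by congr 1; ext; simp
  rw [hcompl, card_compl, Fintype.card_fin, Nat.cast_sub (by simpa using A.card_le_univ)]
  push_cast; ring

theorem sum_eps_of_card_eq_three (hA : #A = 3) : ∑ k, eps A k = 0 := by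
  rw [sum_eps, hA]; norm_num

theorem mk_eps_compl (A : Finset (Fin 6)) :
    Projectivization.mk ℂ (eps Aᶜ) (eps_ne_zero Aᶜ) =
      Projectivization.mk ℂ (eps A) (eps_ne_zero A) :=
  (Projectivization.mk_eq_mk_iff' ..).mpr ⟨-1, by rw [eps_compl, neg_one_smul]⟩

theorem eq_of_mk_eps_eq {k : Fin 6} (hA : k ∈ A) (hB : k ∈ B)
    (h : Projectivization.mk ℂ (eps A) (eps_ne_zero A) =
      Projectivization.mk ℂ (eps B) (eps_ne_zero B)) : A = B := by
  obtain ⟨t, ht⟩ := (Projectivization.mk_eq_mk_iff' ..).mp h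
  have ht1 : t = 1 := by
    simpa [eps_eq_one_iff.mpr hA, eps_eq_one_iff.mpr hB] using congrFun ht k
  rw [ht1, one_smul] at ht
  exact eps_injective ht.symm

end Nodes

theorem nodeOnHyp_iff_exists_zero_mem {y : Fin 6 → ℂ} {p : Projectivization ℂ (Fin 6 → ℂ)} :
    NodeOnHyp y p ↔ ∃ A : Finset (Fin 6), 0 ∈ A ∧ #A = 3 ∧ ∑ k, eps A k * y k = 0 ∧
      p = Projectivization.mk ℂ (eps A) (eps_ne_zero A) := by
  refine ⟨fun ⟨A, hA, hy, hp⟩ => ?_, fun ⟨A, _, hA, hy, hp⟩ => ⟨A, hA, hy, hp⟩⟩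
  by_cases h0 : 0 ∈ A
  · exact ⟨A, h0, hA, hy, hp⟩
  refine ⟨Aᶜ, mem_compl.mpr h0, by rw [card_compl, hA]; rfl, ?_, by rw [mk_eps_compl, hp]⟩
  simp [eps_compl, hy]

theorem ncard_nodeOnHyp (y : Fin 6 → ℂ) [DecidablePred fun A : Finset (Fin 6) =>
      0 ∈ A ∧ #A = 3 ∧ ∑ k, eps A k * y k = 0] :
    {p | NodeOnHyp y p}.ncard = #{A | 0 ∈ A ∧ #A = 3 ∧ ∑ k, eps A k * y k = 0} := by
  have himage : {p | NodeOnHyp y p} = (fun A => Projectivization.mk ℂ (eps A) (eps_ne_zero A)) ''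
      ↑({A | 0 ∈ A ∧ #A = 3 ∧ ∑ k, eps A k * y k = 0} : Finset (Finset (Fin 6))) := by
    ext p
    simp only [Set.mem_ofPred_eq, nodeOnHyp_iff_exists_zero_mem, coe_filter, Set.mem_image,
      mem_univ, true_and]
    constructor
    · rintro ⟨A, h0, hA, hy, rfl⟩; exact ⟨A, ⟨h0, hA, hy⟩, rfl⟩
    · rintro ⟨A, ⟨h0, hA, hy⟩, rfl⟩; exact ⟨A, h0, hA, hy, rfl⟩
  rw [himage, Set.InjOn.ncard_image, Set.ncard_coe_finset]
  intro A hA B hB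
  exact eq_of_mk_eps_eq (mem_filter.mp hA).2.1 (mem_filter.mp hB).2.1

theorem singOnSection_of_nodeOnHyp {y : Fin 6 → ℂ} {p : Projectivization ℂ (Fin 6 → ℂ)}
    (h : NodeOnHyp y p) : SingOnSection y p := by
  obtain ⟨A, hA, hy, rfl⟩ := h
  have hcube (k : Fin 6) : eps A k ^ 3 = eps A k := by rw [pow_succ, eps_sq, one_mul]
  refine ⟨eps A, eps_ne_zero A, rfl, sum_eps_of_card_eq_three hA, ?_, ?_, fun hli => ?_⟩
  · simpa only [hcube] using sum_eps_of_card_eq_three hA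
  · simpa only [mul_comm] using hy
  · have h01 : ![(1 : Fin 6 → ℂ), fun k => eps A k ^ 2, y] 0 =
        ![(1 : Fin 6 → ℂ), fun k => eps A k ^ 2, y] 1 := by
      ext k; simp [eps_sq]
    exact absurd (hli.injective h01) (by decide)

theorem nodeOnHyp_mk_of_sq_eq {y x : Fin 6 → ℂ} (hx : x ≠ 0) (hsq : ∀ k l, x k ^ 2 = x l ^ 2)
    (h1 : ∑ k, x k = 0) (hxy : ∑ k, y k * x k = 0) :
    NodeOnHyp y (Projectivization.mk ℂ x hx) := by
  obtain ⟨l, hl⟩ : ∃ l, x l ≠ 0 := Function.ne_iff.mp hx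
  set A : Finset (Fin 6) := {k | x k = x l}
  have hxA : x = x l • eps A := by
    ext k
    by_cases hk : x k = x l
    · simp [eps, A, hk]
    · have : x k = -x l := (sq_eq_sq_iff_eq_or_eq_neg.mp (hsq k l)).resolve_left hk
      simp [eps, A, this]
  have hA : #A = 3 := by
    rw [hxA] at h1
    simp only [Pi.smul_apply, smul_eq_mul, ← mul_sum, sum_eps, mul_eq_zero, hl, false_or] at h1
    exact_mod_cast (by linear_combination h1 / 2 : (#A : ℂ) = 3)
  refine ⟨A, hA, ?_, (Projectivization.mk_eq_mk_iff' ..).mpr ⟨x l, hxA.symm⟩⟩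
  rw [hxA] at hxy
  simp only [Pi.smul_apply, smul_eq_mul] at hxy
  refine (mul_eq_zero.mp ?_).resolve_left hl
  rw [mul_sum, ← hxy]
  exact sum_congr rfl fun k _ => by ring

theorem nodeOnHyp_of_singOnSection {y : Fin 6 → ℂ} (hy : ∑ k, y k = 0)
    (hCR : (∑ k, y k ^ 2) ^ 2 ≠ 4 * ∑ k, y k ^ 4) {p : Projectivization ℂ (Fin 6 → ℂ)}
    (h : SingOnSection y p) : NodeOnHyp y p := by
  obtain ⟨x, hx, rfl, h1, h3, hxy, hdep⟩ := h
  obtain ⟨g, hg, i, hi⟩ := Fintype.not_linearIndependent_iff.mp hdep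
  have hgk (k : Fin 6) : g 0 + g 1 * x k ^ 2 + g 2 * y k = 0 := by
    simpa [Fin.sum_univ_three] using congrFun hg k
  by_cases hg2 : g 2 = 0
  · have hg1 : g 1 ≠ 0 := by
      intro hg1
      have hg0 : g 0 = 0 := by simpa [hg1, hg2] using hgk 0
      fin_cases i <;> simp_all
    refine nodeOnHyp_mk_of_sq_eq hx (fun k l => mul_left_cancel₀ hg1 ?_) h1 hxy
    linear_combination hgk k - hgk l - (y k - y l) * hg2
  · refine absurd (sq_sum_sq_eq_four_mul_sum_pow_four_of_eq_add_mul_sq h1 h3 hy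
      (-g 0 / g 2) (-g 1 / g 2) fun k => ?_) hCR
    field_simp
    linear_combination hgk k

theorem setOf_singOnSection_eq {y : Fin 6 → ℂ} (hy : ∑ k, y k = 0)
    (hCR : (∑ k, y k ^ 2) ^ 2 ≠ 4 * ∑ k, y k ^ 4) :
    {p | SingOnSection y p} = {p | NodeOnHyp y p} :=
  Set.ext fun _ => ⟨nodeOnHyp_of_singOnSection hy hCR, singOnSection_of_nodeOnHyp⟩

theorem hyperplaneSection_of_intCast {y : Fin 6 → ℂ} {r : ℕ} (z : Fin 6 → ℤ)
    (hyz : ∀ k, y k = z k) (hz : z ≠ 0) (hsum : ∑ k, z k = 0)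
    (hCR : (∑ k, z k ^ 2) ^ 2 ≠ 4 * ∑ k, z k ^ 4)
    (hr : #{A : Finset (Fin 6) | 0 ∈ A ∧ #A = 3 ∧ ∑ k, (if k ∈ A then z k else -z k) = 0} = r) :
    y ≠ 0 ∧ ∑ k, y k = 0 ∧ (∑ k, y k ^ 2) ^ 2 ≠ 4 * ∑ k, y k ^ 4 ∧
      {p | NodeOnHyp y p}.ncard = r ∧ {p | SingOnSection y p}.ncard = r := by
  have hy0 : y ≠ 0 := fun h => hz <| funext fun k => by simpa [hyz] using congrFun h k
  have hysum : ∑ k, y k = 0 := by simp only [hyz]; exact_mod_cast hsum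
  have hyCR : (∑ k, y k ^ 2) ^ 2 ≠ 4 * ∑ k, y k ^ 4 := by simp only [hyz]; exact_mod_cast hCR
  have hnodes : {p | NodeOnHyp y p}.ncard = r := by
    classical
    rw [ncard_nodeOnHyp, ← hr]
    congr 1
    refine filter_congr fun A _ => and_congr_right' <| and_congr_right' ?_
    have : ∑ k, eps A k * y k = ((∑ k, if k ∈ A then z k else -z k : ℤ) : ℂ) := by
      push_cast
      exact sum_congr rfl fun k _ => by by_cases h : k ∈ A <;> simp [eps, h, hyz]
    rw [this, Int.cast_eq_zero]
  exact ⟨hy0, hysum, hyCR, hnodes, setOf_singOnSection_eq hysum hyCR ▸ hnodes⟩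

theorem eij_apply (i j k : Fin 6) : eij i j k = (Pi.single i 1 - Pi.single j 1 : Fin 6 → ℤ) k := by
  simp [eij, Pi.single_apply]

/-- for each `r ∈ {2,3,4}` there is a hyperplane `H_y`, with `[y]` not on
the Castelnuovo–Richmond quartic, containing exactly `r` of the 10 nodes, so that the
cubic surface `Σ₃ ∩ H_y` has exactly `r` singular points; for `r = 4` one may take
`y = e_i - e_j` for any `i ≠ j`. -/
theorem r_nodal_hyperplane_sections :
    (∀ r : ℕ, r = 2 ∨ r = 3 ∨ r = 4 →
      ∃ y : Fin 6 → ℂ, y ≠ 0 ∧ (∑ k, y k) = 0 ∧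
        (∑ k, (y k) ^ 2) ^ 2 ≠ 4 * (∑ k, (y k) ^ 4) ∧
        {p | NodeOnHyp y p}.ncard = r ∧
        {p | SingOnSection y p}.ncard = r) ∧
    (∀ i j : Fin 6, i ≠ j →
      eij i j ≠ 0 ∧
      (∑ k, eij i j k) = 0 ∧
      (∑ k, (eij i j k) ^ 2) ^ 2 ≠ 4 * (∑ k, (eij i j k) ^ 4) ∧
      {p | NodeOnHyp (eij i j) p}.ncard = 4 ∧
      {p | SingOnSection (eij i j) p}.ncard = 4) := by
  have four_nodal (i j : Fin 6) (hij : i ≠ j) :=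
    hyperplaneSection_of_intCast (r := 4) _ (eij_apply i j) (by revert i j; decide)
      (by revert i j; decide) (by revert i j; decide) (by revert i j; decide)
  refine ⟨fun r hr => ?_, four_nodal⟩
  obtain rfl | rfl | rfl := hr
  · exact ⟨_, hyperplaneSection_of_intCast ![-2, -2, 0, 1, 1, 2] (fun _ => rfl)
      (by decide) (by decide) (by decide) (by decide)⟩
  · exact ⟨_, hyperplaneSection_of_intCast ![-2, -1, 0, 1, 1, 1] (fun _ => rfl)
      (by decide) (by decide) (by decide) (by decide)⟩
  · exact ⟨_, four_nodal 0 1 (by decide)⟩
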